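/- For an integral modular datum whose Verlinde matrix entries and Dehn matrix entries lie in the cyclotomic field Q_N, the fusion symbol f(q) = σ_q(g)/g (for q coprime to N, where σ_q is the Galois automorphism raising N-th roots of unity to the q-th power and g is the Gaussian sum) satisfies f(q)^{2N} = 1; if N is even then f(q)^N = 1. -/

import Mathlib

open Finset

/-- A modular datum over a field `K` of characteristic zero: a finite index set `I` with a
distinguished element `o`, an involution `star` fixing `o`, a symmetric Verlinde matrix `S`
with nonzero first column, a diagonal Dehn matrix with entries `T i` of finite order
satisfying `T (star i) = T i`, such that `S² = n·C` for a nonzero global dimension `n`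
(where `C = (δ_{i,j*})`), the matrices `T⁻¹ST⁻¹` and `STS` are proportional, and the
Verlinde numbers `N_{ij}^k` are nonnegative integers. -/
structure ModularDatum (K : Type*) [Field K] [CharZero K]
    (I : Type*) [Fintype I] [DecidableEq I] where
  o : I
  star : I → I
  S : Matrix I I K
  T : I → K
  n : K
  star_involutive : Function.Involutive star
  star_o : star o = o
  S_symm : ∀ i j, S i j = S j i
  S_io_ne : ∀ i, S i o ≠ 0
  T_star : ∀ i, T (star i) = T i
  T_order : ∃ N : ℕ, 0 < N ∧ ∀ i, T i ^ N = 1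
  n_ne : n ≠ 0
  S_sq : ∀ i k, (∑ j, S i j * S j k) = n * (if i = star k then 1 else 0)
  proportional : ∃ c : K, ∀ i j,
    (T i)⁻¹ * S i j * (T j)⁻¹ = c * ∑ k, S i k * T k * S k j
  verlinde : ∀ i j k, ∃ m : ℕ,
    (1 / n) * ∑ l, S i l * S j l * S (star k) l / S o l = (m : K)

namespace ModularDatum

variable {K : Type*} [Field K] [CharZero K] {I : Type*} [Fintype I] [DecidableEq I]
variable (d : ModularDatum K I)

/-- The `i`-th dimension `n_i = s_{io}`. -/
def ni (i : I) : K := d.S i d.o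

/-- The Gaussian sum `g = Σ_i n_i² t_i`. -/
def gauss : K := ∑ i, d.ni i ^ 2 * d.T i

/-- The reciprocal Gaussian sum `g' = Σ_i n_i² / t_i`. -/
def gauss' : K := ∑ i, d.ni i ^ 2 * (d.T i)⁻¹

/-- The Verlinde numbers `N_{ij}^k = (1/n) Σ_l s_{il} s_{jl} s_{k*l} / s_{ol}`. -/
def Nc (i j k : I) : K := (1 / d.n) * ∑ l, d.S i l * d.S j l * d.S (d.star k) l / d.S d.o l

end ModularDatum

/-!
Read at the entry `(o, o)`, the proportionality `T⁻¹ S T⁻¹ = c • S T S` gives `c g t_o² = n_o`;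
taking determinants gives `c^m det S det(T)³ = 1`, and together with `det(S)² = ±n^m` this yields
`g^(2m) t_o^(4m) = ±n^m n_o^(2m) det(T)⁶`. When the dimensions are rational this is a polynomial
identity over `ℚ` in the roots of unity `t_i`, so it survives `σ_q`. Comparing the two identities,
`f(q)^(2m)` is an `N`-th root of unity, so `f(q)` is a root of unity of the cyclotomic field
`ℚ(μ_N)`, whose torsion has order dividing `2N`, and dividing `N` when `N` is even.
-/

open NumberField

def adjoinRootsOfUnity (N : ℕ) (K : Type*) [Field K] [CharZero K] : IntermediateField ℚ K :=
  IntermediateField.adjoin ℚ {x : K | x ^ N = 1}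

section RootsOfUnity

variable {N : ℕ} [NeZero N] {K : Type*} [Field K]

theorem pow_natCard_rootsOfUnity_eq_one {x : K} (hx : x ^ N = 1) :
    x ^ Nat.card (rootsOfUnity N K) = 1 := by
  simpa using congrArg (fun y : rootsOfUnity N K => ((y : Kˣ) : K))
    (pow_card_eq_one' (x := rootsOfUnity.mkOfPowEq x hx))

theorem natCard_rootsOfUnity_dvd : Nat.card (rootsOfUnity N K) ∣ N := by
  rw [← IsCyclic.exponent_eq_card]
  exact Monoid.exponent_dvd_of_forall_pow_eq_one fun ζ =>
    Subtype.ext ((mem_rootsOfUnity _ _).1 ζ.2)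

theorem exists_isPrimitiveRoot_natCard_rootsOfUnity :
    ∃ ζ : K, IsPrimitiveRoot ζ (Nat.card (rootsOfUnity N K)) := by
  obtain ⟨ζ, hζ⟩ := IsCyclic.exists_ofOrder_eq_natCard (α := rootsOfUnity N K)
  refine ⟨((ζ : Kˣ) : K), ?_⟩
  rw [← hζ, ← Subgroup.orderOf_coe, ← orderOf_units]
  exact IsPrimitiveRoot.orderOf _

instance : NeZero (Nat.card (rootsOfUnity N K)) :=
  ⟨ne_zero_of_dvd_ne_zero (NeZero.ne N) natCard_rootsOfUnity_dvd⟩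

end RootsOfUnity

section AdjoinRootsOfUnity

variable {N : ℕ} {K : Type*} [Field K] [CharZero K]

theorem mem_adjoinRootsOfUnity_of_pow_eq_one {x : K} (hx : x ^ N = 1) :
    x ∈ adjoinRootsOfUnity N K :=
  IntermediateField.subset_adjoin _ _ hx

theorem pow_eq_one_of_mem_adjoinRootsOfUnity {y : K} (hy : y ∈ adjoinRootsOfUnity N K) {k : ℕ}
    (hk : 0 < k) (hyk : y ^ k = 1) {e : ℕ}
    (he : Units.torsionOrder (adjoinRootsOfUnity N K) ∣ e) : y ^ e = 1 := by
  set y' : adjoinRootsOfUnity N K := ⟨y, hy⟩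
  have : NeZero (orderOf y') :=
    ⟨(isOfFinOrder_iff_pow_eq_one.2 ⟨k, hk, Subtype.ext (by simpa using hyk)⟩).orderOf_pos.ne'⟩
  have hdvd := Units.dvd_torsionOrder_of_isPrimitiveRoot (IsPrimitiveRoot.orderOf y')
  simpa [y'] using congrArg Subtype.val (orderOf_dvd_iff_pow_eq_one.1 (hdvd.trans he))

variable [NeZero N]

/- `K` need not contain a primitive `N`-th root of unity: its `N`-th roots of unity are the
`M`-th roots for `M = #μ_N(K)`, and it contains a primitive `M`-th root. -/
instance : IsCyclotomicExtension {Nat.card (rootsOfUnity N K)} ℚ (adjoinRootsOfUnity N K) := by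
  have hroots : {x : K | x ^ N = 1} =
      {x : K | ∃ n ∈ ({Nat.card (rootsOfUnity N K)} : Set ℕ), n ≠ 0 ∧ x ^ n = 1} := by
    ext x
    simp only [Set.mem_ofPred_eq, Set.mem_singleton_iff, exists_eq_left]
    refine ⟨fun hx => ⟨NeZero.ne _, pow_natCard_rootsOfUnity_eq_one hx⟩, fun ⟨_, hx⟩ => ?_⟩
    obtain ⟨k, hk⟩ := natCard_rootsOfUnity_dvd (N := N) (K := K)
    rw [hk, pow_mul, hx, one_pow]
  unfold adjoinRootsOfUnity
  rw [hroots]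
  exact IntermediateField.isCyclotomicExtension_adjoin_of_exists_isPrimitiveRoot _ ℚ K
    fun n hn _ => hn ▸ exists_isPrimitiveRoot_natCard_rootsOfUnity

instance : NumberField (adjoinRootsOfUnity N K) :=
  IsCyclotomicExtension.numberField {Nat.card (rootsOfUnity N K)} ℚ _

theorem torsionOrder_adjoinRootsOfUnity_dvd_two_mul :
    Units.torsionOrder (adjoinRootsOfUnity N K) ∣ 2 * N := by
  rw [IsCyclotomicExtension.Rat.torsionOrder_eq (n := Nat.card (rootsOfUnity N K))]
  have hM := natCard_rootsOfUnity_dvd (N := N) (K := K)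
  split_ifs
  · exact hM.mul_left 2
  · exact mul_dvd_mul_left 2 hM

theorem torsionOrder_adjoinRootsOfUnity_dvd_of_even (hN : Even N) :
    Units.torsionOrder (adjoinRootsOfUnity N K) ∣ N := by
  rw [IsCyclotomicExtension.Rat.torsionOrder_eq (n := Nat.card (rootsOfUnity N K))]
  have hM := natCard_rootsOfUnity_dvd (N := N) (K := K)
  split_ifs with hMeven
  · exact hM
  · exact (Nat.coprime_two_left.2 (Nat.not_even_iff_odd.1 hMeven)).mul_dvd_of_dvd_of_dvd
      hN.two_dvd hM

theorem exists_algEquiv_adjoinRootsOfUnity_pow {q : ℕ} (hq : q.Coprime N) :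
    ∃ σ : adjoinRootsOfUnity N K ≃ₐ[ℚ] adjoinRootsOfUnity N K, ∀ x, x ^ N = 1 → σ x = x ^ q := by
  set M := Nat.card (rootsOfUnity N K)
  refine ⟨(IsCyclotomicExtension.Rat.galEquivZMod M _).symm
    (ZMod.unitOfCoprime q (hq.coprime_dvd_right natCard_rootsOfUnity_dvd)), fun x hx => ?_⟩
  have hxM : x ^ M = 1 := by
    have hxK : (x : K) ^ N = 1 := by exact_mod_cast hx
    exact_mod_cast pow_natCard_rootsOfUnity_eq_one hxK
  rw [IsCyclotomicExtension.Rat.galEquivZMod_apply_of_pow_eq M _ _ hxM, MulEquiv.apply_symm_apply,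
    ZMod.coe_unitOfCoprime, ZMod.val_natCast, ← pow_eq_pow_mod q hxM]

theorem MvPolynomial.aeval_pow_eq_zero_of_coprime {ι : Type*} {x : ι → K}
    (hx : ∀ i, x i ^ N = 1) {q : ℕ} (hq : q.Coprime N) {P : MvPolynomial ι ℚ}
    (hP : aeval x P = 0) : aeval (fun i => x i ^ q) P = 0 := by
  obtain ⟨σ, hσ⟩ := exists_algEquiv_adjoinRootsOfUnity_pow (K := K) hq
  have hcoe (z : ι → adjoinRootsOfUnity N K) :
      (aeval z P : K) = aeval (fun i => (z i : K)) P :=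
    comp_aeval_apply z (adjoinRootsOfUnity N K).val P
  let y (i : ι) : adjoinRootsOfUnity N K := ⟨x i, mem_adjoinRootsOfUnity_of_pow_eq_one (hx i)⟩
  have hσy (i : ι) : σ (y i) = y i ^ q := hσ _ (Subtype.ext (by simpa using hx i))
  have hyP : aeval y P = 0 := Subtype.ext (by rw [hcoe]; exact hP)
  calc aeval (fun i => x i ^ q) P
      = (aeval (fun i => σ (y i)) P : K) := by rw [hcoe]; simp [hσy, y]
    _ = (σ (aeval y P) : K) := by rw [← AlgEquiv.coe_toAlgHom, comp_aeval_apply]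
    _ = 0 := by rw [hyP, map_zero]; rfl

end AdjoinRootsOfUnity

namespace ModularDatum

variable {K : Type*} [Field K] [CharZero K] {I : Type*} [Fintype I] [DecidableEq I]
variable (d : ModularDatum K I)

theorem T_ne_zero (i : I) : d.T i ≠ 0 := by
  obtain ⟨N, hN, hT⟩ := d.T_order
  rintro h
  simpa [h, zero_pow hN.ne'] using hT i

def starPerm : Equiv.Perm I := d.star_involutive.toPerm

theorem S_mul_S : d.S * d.S = d.n • d.starPerm.permMatrix K := by
  ext i k
  simp [Matrix.mul_apply, d.S_sq, starPerm, d.star_involutive.eq_iff]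

theorem det_S_sq : d.S.det ^ 2 = (Equiv.Perm.sign d.starPerm : ℤ) * d.n ^ Fintype.card I := by
  rw [sq, ← Matrix.det_mul, S_mul_S, Matrix.det_smul, Matrix.det_permutation, mul_comm]

theorem det_S_ne_zero : d.S.det ≠ 0 := by
  have hsign : ((Equiv.Perm.sign d.starPerm : ℤ) : K) ≠ 0 := by simp
  exact pow_ne_zero_iff two_ne_zero |>.1 (d.det_S_sq ▸ mul_ne_zero hsign (pow_ne_zero _ d.n_ne))

theorem n_eq_sum_ni_sq : d.n = ∑ i, d.ni i ^ 2 := by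
  have := d.S_sq d.o d.o
  simp only [d.star_o, if_true, mul_one] at this
  rw [← this]
  exact Finset.sum_congr rfl fun i _ => by rw [ni, sq, d.S_symm]

section Proportional

variable {d} {c : K}
  (hc : ∀ i j, (d.T i)⁻¹ * d.S i j * (d.T j)⁻¹ = c * ∑ k, d.S i k * d.T k * d.S k j)
include hc

theorem diagonal_inv_mul_S_mul_diagonal_inv :
    Matrix.diagonal d.T⁻¹ * d.S * Matrix.diagonal d.T⁻¹ =
      c • (d.S * Matrix.diagonal d.T * d.S) := by
  ext i j
  rw [Matrix.mul_diagonal, Matrix.diagonal_mul, Matrix.smul_apply, Matrix.mul_apply, Pi.inv_apply,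
    Pi.inv_apply, hc, smul_eq_mul]
  simp only [Matrix.mul_diagonal]

theorem inv_T_mul_ni_mul_inv_T : (d.T d.o)⁻¹ * d.ni d.o * (d.T d.o)⁻¹ = c * d.gauss := by
  rw [ni, hc, gauss]
  congr 1
  exact Finset.sum_congr rfl fun k _ => by rw [ni, d.S_symm]; ring

theorem pow_card_mul_det_S_mul_prod_T_pow_three :
    c ^ Fintype.card I * d.S.det * (∏ i, d.T i) ^ 3 = 1 := by
  have := congrArg Matrix.det (diagonal_inv_mul_S_mul_diagonal_inv hc)
  simp only [Matrix.det_mul, Matrix.det_smul, Matrix.det_diagonal, Pi.inv_apply,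
    Finset.prod_inv_distrib] at this
  have hT : ∏ i, d.T i ≠ 0 := Finset.prod_ne_zero_iff.2 fun i _ => d.T_ne_zero i
  have hS := d.det_S_ne_zero
  field_simp at this
  linear_combination -this

end Proportional

theorem gauss_pow_card_mul_T_pow :
    d.gauss ^ Fintype.card I * d.T d.o ^ (2 * Fintype.card I) =
      d.ni d.o ^ Fintype.card I * (∏ i, d.T i) ^ 3 * d.S.det := by
  obtain ⟨c, hc⟩ := d.proportional
  have hcg : c * d.gauss * d.T d.o ^ 2 = d.ni d.o := by
    rw [← inv_T_mul_ni_mul_inv_T hc]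
    field_simp [d.T_ne_zero d.o]
  rw [← hcg]
  linear_combination (-(d.gauss ^ Fintype.card I * d.T d.o ^ (2 * Fintype.card I))) *
    pow_card_mul_det_S_mul_prod_T_pow_three hc

theorem gauss_pow_two_mul_card :
    d.gauss ^ (2 * Fintype.card I) * d.T d.o ^ (4 * Fintype.card I) =
      (Equiv.Perm.sign d.starPerm : ℤ) * d.n ^ Fintype.card I * d.ni d.o ^ (2 * Fintype.card I) *
        (∏ i, d.T i) ^ 6 := by
  have := congrArg (· ^ 2) d.gauss_pow_card_mul_T_pow
  simp only [mul_pow, d.det_S_sq] at this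
  linear_combination this

theorem sum_ni_sq_mul_T_pow_mem_adjoinRootsOfUnity {N : ℕ}
    (hrat : ∀ i, d.ni i ∈ (algebraMap ℚ K).range) (hT : ∀ i, d.T i ^ N = 1) (q : ℕ) :
    ∑ i, d.ni i ^ 2 * d.T i ^ q ∈ adjoinRootsOfUnity N K := by
  refine sum_mem fun i _ => mul_mem (pow_mem ?_ 2)
    (pow_mem (mem_adjoinRootsOfUnity_of_pow_eq_one (hT i)) q)
  obtain ⟨r, hr⟩ := hrat i
  exact hr ▸ IntermediateField.algebraMap_mem _ r

variable {d} {N : ℕ} [NeZero N] (hrat : ∀ i, d.ni i ∈ (algebraMap ℚ K).range)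
  (hT : ∀ i, d.T i ^ N = 1) {q : ℕ} (hq : q.Coprime N)
include hrat hT hq

theorem sum_ni_sq_mul_T_pow_pow_two_mul_card :
    (∑ i, d.ni i ^ 2 * d.T i ^ q) ^ (2 * Fintype.card I) * (d.T d.o ^ q) ^ (4 * Fintype.card I) =
      (Equiv.Perm.sign d.starPerm : ℤ) * d.n ^ Fintype.card I * d.ni d.o ^ (2 * Fintype.card I) *
        ((∏ i, d.T i) ^ q) ^ 6 := by
  choose w hw using hrat
  open MvPolynomial in
  let P : MvPolynomial I ℚ :=
    (∑ i, C (w i ^ 2) * X i) ^ (2 * Fintype.card I) * X d.o ^ (4 * Fintype.card I) -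
      C ((Equiv.Perm.sign d.starPerm : ℤ) * (∑ i, w i ^ 2) ^ Fintype.card I *
        w d.o ^ (2 * Fintype.card I)) * (∏ i, X i) ^ 6
  have hP (x : I → K) : MvPolynomial.aeval x P =
      (∑ i, d.ni i ^ 2 * x i) ^ (2 * Fintype.card I) * x d.o ^ (4 * Fintype.card I) -
      (Equiv.Perm.sign d.starPerm : ℤ) * d.n ^ Fintype.card I * d.ni d.o ^ (2 * Fintype.card I) *
        (∏ i, x i) ^ 6 := by
    simp [P, hw, n_eq_sum_ni_sq]
  have := MvPolynomial.aeval_pow_eq_zero_of_coprime hT hq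
    (by rw [hP, sub_eq_zero]; exact d.gauss_pow_two_mul_card)
  rwa [hP, sub_eq_zero, Finset.prod_pow] at this

theorem fusion_symbol_pow_two_mul_card_mul :
    ((∑ i, d.ni i ^ 2 * d.T i ^ q) / d.gauss) ^ (2 * Fintype.card I * N) = 1 := by
  have hg := d.gauss_pow_two_mul_card
  have hgq := sum_ni_sq_mul_T_pow_pow_two_mul_card hrat hT hq
  set m := Fintype.card I
  set r : K := (Equiv.Perm.sign d.starPerm : ℤ) * d.n ^ m * d.ni d.o ^ (2 * m)
  set b := ∏ i, d.T i
  set t := d.T d.o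
  have hr : r ≠ 0 :=
    mul_ne_zero (mul_ne_zero (by simp) (pow_ne_zero _ d.n_ne)) (pow_ne_zero _ (d.S_io_ne d.o))
  have hb : b ^ N = 1 := by rw [← Finset.prod_pow]; exact Finset.prod_eq_one fun i _ => hT i
  have hb0 : b ≠ 0 := Finset.prod_ne_zero_iff.2 fun i _ => d.T_ne_zero i
  have ht0 : t ≠ 0 := d.T_ne_zero d.o
  have hg0 : d.gauss ≠ 0 := by
    rintro h0
    have hm : 2 * m ≠ 0 := mul_ne_zero two_ne_zero (Fintype.card_pos_iff.2 ⟨d.o⟩).ne'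
    rw [h0, zero_pow hm, zero_mul] at hg
    exact mul_ne_zero hr (pow_ne_zero 6 hb0) hg.symm
  have hf : ((∑ i, d.ni i ^ 2 * d.T i ^ q) / d.gauss) ^ (2 * m) =
      (b ^ q) ^ 6 * t ^ (4 * m) / (b ^ 6 * (t ^ q) ^ (4 * m)) := by
    rw [div_pow, div_eq_div_iff (pow_ne_zero _ hg0)
      (mul_ne_zero (pow_ne_zero _ hb0) (pow_ne_zero _ (pow_ne_zero _ ht0)))]
    linear_combination b ^ 6 * hgq - (b ^ q) ^ 6 * hg
  rw [pow_mul, hf]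
  calc _ = ((b ^ N) ^ q) ^ 6 * (t ^ N) ^ (4 * m) / ((b ^ N) ^ 6 * ((t ^ N) ^ q) ^ (4 * m)) := by
        ring
    _ = 1 := by simp [hb, hT d.o, t]

end ModularDatum

/-- For an integral modular datum with exponent `N`, the fusion symbol
`f(q) = σ_q(g)/g = (Σ_i n_i² t_i^q)/g` (for `q` coprime to `N`) satisfies `f(q)^(2N) = 1`;
if moreover `N` is even, then `f(q)^N = 1`. -/
theorem ModularDatum.fusion_symbol_pow {K : Type*} [Field K] [CharZero K]
    {I : Type*} [Fintype I] [DecidableEq I] (d : ModularDatum K I)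
    (hint : ∀ i, ∃ m : ℕ, 0 < m ∧ d.ni i = (m : K))
    (N : ℕ) (hN : 0 < N) (hT : ∀ i, d.T i ^ N = 1)
    (q : ℕ) (hq : Nat.Coprime q N) :
    ((∑ i, d.ni i ^ 2 * d.T i ^ q) / d.gauss) ^ (2 * N) = 1 ∧
    (Even N → ((∑ i, d.ni i ^ 2 * d.T i ^ q) / d.gauss) ^ N = 1) := by
  have : NeZero N := ⟨hN.ne'⟩
  have hrat (i : I) : d.ni i ∈ (algebraMap ℚ K).range := by
    obtain ⟨m, -, hm⟩ := hint i
    exact ⟨m, by rw [hm, map_natCast]⟩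
  have hmem : (∑ i, d.ni i ^ 2 * d.T i ^ q) / d.gauss ∈ adjoinRootsOfUnity N K :=
    div_mem (d.sum_ni_sq_mul_T_pow_mem_adjoinRootsOfUnity hrat hT q)
      (by simpa [gauss] using d.sum_ni_sq_mul_T_pow_mem_adjoinRootsOfUnity hrat hT 1)
  have hpos : 0 < 2 * Fintype.card I * N := by
    have := Fintype.card_pos_iff.2 ⟨d.o⟩
    positivity
  have hpow := fusion_symbol_pow_two_mul_card_mul hrat hT hq
  exact ⟨pow_eq_one_of_mem_adjoinRootsOfUnity hmem hpos hpow
      torsionOrder_adjoinRootsOfUnity_dvd_two_mul,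
    fun hN => pow_eq_one_of_mem_adjoinRootsOfUnity hmem hpos hpow
      (torsionOrder_adjoinRootsOfUnity_dvd_of_even hN)⟩
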